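/- arXiv:2508.00722 — 2 statements merged into one kernel-verified Lean document; each statement's English description precedes it below -/
import Mathlib

section
/- One step of the low-rank ADI iteration preserves the low-rank residual identity: Let A, E ∈ ℂ^{n×n}, G ∈ ℂ^{n×g}, S ∈ ℂ^{g×g}, T ∈ ℂ^{g×g}. Suppose Z ∈ ℂ^{n×z}, Y ∈ ℂ^{z×z}, R ∈ ℂ^{n×g} satisfy Aᴴ(Z Y Zᴴ)E + Eᴴ(Z Y Zᴴ)A + GSGᴴ = R T Rᴴ. Let α ∈ ℂ be such that Aᴴ + α Eᴴ is invertible, and define V = (Aᴴ + α Eᴴ)⁻¹ R, R₊ = R − 2 Re(α) Eᴴ V, Z₊ = [Z | V] ∈ ℂ^{n×(z+g)}, and Y₊ = [[Y, 0],[0, −2 Re(α) T]] ∈ ℂ^{(z+g)×(z+g)} (block-diagonal with block sizes z, g). Then Aᴴ(Z₊ Y₊ Z₊ᴴ)E + Eᴴ(Z₊ Y₊ Z₊ᴴ)A + GSGᴴ = R₊ T R₊ᴴ. -/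
open Matrix

/--
One step of the low-rank ADI iteration preserves the low-rank residual identity:
if `Aᴴ(Z Y Zᴴ)E + Eᴴ(Z Y Zᴴ)A + GSGᴴ = R T Rᴴ` and `Aᴴ + α Eᴴ` is invertible, then with
`V = (Aᴴ + α Eᴴ)⁻¹ R`, `R₊ = R − 2 Re(α) Eᴴ V`, `Z₊ = [Z | V]`,
`Y₊ = [[Y, 0],[0, −2 Re(α) T]]`, one has
`Aᴴ(Z₊ Y₊ Z₊ᴴ)E + Eᴴ(Z₊ Y₊ Z₊ᴴ)A + GSGᴴ = R₊ T R₊ᴴ`.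
-/
theorem lowrank_adi_step_residual
    (n g z : ℕ)
    (A E : Matrix (Fin n) (Fin n) ℂ)
    (G : Matrix (Fin n) (Fin g) ℂ)
    (S T : Matrix (Fin g) (Fin g) ℂ)
    (Z : Matrix (Fin n) (Fin z) ℂ)
    (Y : Matrix (Fin z) (Fin z) ℂ)
    (R : Matrix (Fin n) (Fin g) ℂ)
    (hres : Aᴴ * (Z * Y * Zᴴ) * E + Eᴴ * (Z * Y * Zᴴ) * A + G * S * Gᴴ = R * T * Rᴴ)
    (α : ℂ)
    (hα : IsUnit (Aᴴ + α • Eᴴ))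
    (V : Matrix (Fin n) (Fin g) ℂ)
    (hV : V = (Aᴴ + α • Eᴴ)⁻¹ * R)
    (Rplus : Matrix (Fin n) (Fin g) ℂ)
    (hRplus : Rplus = R - ((2 * α.re : ℝ) : ℂ) • (Eᴴ * V))
    (Zplus : Matrix (Fin n) (Fin z ⊕ Fin g) ℂ)
    (hZplus : Zplus = fromCols Z V)
    (Yplus : Matrix (Fin z ⊕ Fin g) (Fin z ⊕ Fin g) ℂ)
    (hYplus : Yplus = fromBlocks Y 0 0 (((-(2 * α.re) : ℝ) : ℂ) • T)) :
    Aᴴ * (Zplus * Yplus * Zplusᴴ) * E + Eᴴ * (Zplus * Yplus * Zplusᴴ) * A + G * S * Gᴴ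
      = Rplus * T * Rplusᴴ := by
  -- scalar: 2 Re α = α + conj α
  have hc : ((2 * α.re : ℝ) : ℂ) = α + (starRingEnd ℂ) α := (Complex.add_conj α).symm
  have hc' : ((-(2 * α.re) : ℝ) : ℂ) = -(α + (starRingEnd ℂ) α) := by
    push_cast; rw [← hc]; push_cast; ring
  -- M V = R
  have hMV : (Aᴴ + α • Eᴴ) * V = R := by
    rw [hV, Matrix.mul_nonsing_inv_cancel_left]
    exact (Matrix.isUnit_iff_isUnit_det _).mp hα
  have hAV : Aᴴ * V = R - α • (Eᴴ * V) := by
    rw [← hMV, Matrix.add_mul, Matrix.smul_mul]; abel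
  have hVA : Vᴴ * A = Rᴴ - (starRingEnd ℂ) α • (Vᴴ * E) := by
    have h := congrArg conjTranspose hAV
    simpa [Matrix.conjTranspose_mul, Matrix.conjTranspose_smul, Matrix.conjTranspose_sub] using h
  -- block product
  have hblock : Zplus * Yplus * Zplusᴴ
      = Z * Y * Zᴴ + (-(α + (starRingEnd ℂ) α)) • (V * T * Vᴴ) := by
    rw [hZplus, hYplus, hc', conjTranspose_fromCols_eq_fromRows_conjTranspose,
      fromCols_mul_fromBlocks, fromCols_mul_fromRows]
    simp [Matrix.mul_smul, Matrix.smul_mul, Matrix.mul_assoc]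
  have hGS : G * S * Gᴴ = R * T * Rᴴ - (Aᴴ * (Z * Y * Zᴴ) * E + Eᴴ * (Z * Y * Zᴴ) * A) := by
    rw [← hres]; abel
  rw [hblock, hGS, hRplus, hc]
  simp only [Matrix.mul_add, Matrix.add_mul, Matrix.sub_mul, Matrix.mul_sub,
    Matrix.mul_smul, Matrix.smul_mul, smul_smul, Matrix.conjTranspose_sub,
    Matrix.conjTranspose_smul, Matrix.conjTranspose_mul, Matrix.conjTranspose_conjTranspose,
    neg_smul, Matrix.neg_mul, Matrix.mul_neg, Matrix.mul_assoc]
  have e1 : Aᴴ * (V * (T * (Vᴴ * E))) = (R - α • (Eᴴ * V)) * (T * (Vᴴ * E)) := by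
    rw [← hAV]; simp only [Matrix.mul_assoc]
  have e2 : Eᴴ * (V * (T * (Vᴴ * A))) = Eᴴ * (V * (T * (Rᴴ - (starRingEnd ℂ) α • (Vᴴ * E)))) := by
    rw [← hVA]
  rw [e1, e2]
  simp only [Matrix.sub_mul, Matrix.mul_sub, Matrix.smul_mul, Matrix.mul_smul, smul_smul,
    star_add, Complex.star_def, Complex.conj_conj, Matrix.mul_assoc]
  module
end

section
/- Exact-arithmetic correctness of the low-rank ADI iteration (Algorithm 1): Let A, E ∈ ℂ^{n×n}, G ∈ ℂ^{n×g}, S ∈ ℂ^{g×g}, and let (α_i)_{i∈ℕ} ⊆ ℂ be shift parameters such that Aᴴ + α_i Eᴴ is invertible for every i. Define recursively Z₀ ∈ ℂ^{n×0} and Y₀ ∈ ℂ^{0×0} as empty matrices, R₀ = G, and for each k ≥ 0: V_k = (Aᴴ + α_k Eᴴ)⁻¹ R_k, R_{k+1} = R_k − 2 Re(α_k) Eᴴ V_k, Z_{k+1} = [Z_k | V_k] ∈ ℂ^{n×(k+1)g}, and Y_{k+1} = [[Y_k, 0],[0, −2 Re(α_k) S]] ∈ ℂ^{(k+1)g×(k+1)g}.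 Then for every k ≥ 0, the Lyapunov residual of the k-th iterate admits the low-rank representation Aᴴ(Z_k Y_k Z_kᴴ)E + Eᴴ(Z_k Y_k Z_kᴴ)A + GSGᴴ = R_k S R_kᴴ. -/
open Matrix

/-- Index type for the columns of the `k`-th low-rank ADI solution factor:
`adiIdx g 0` is empty (the empty matrix `Z₀ ∈ ℂ^{n×0}`), and each ADI step
appends `g` columns, so `adiIdx g (k+1) = adiIdx g k ⊕ Fin g` (i.e. `(k+1)·g` columns). -/
def adiIdx (g : ℕ) : ℕ → Type
  | 0 => Fin 0
  | k + 1 => adiIdx g k ⊕ Fin g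

instance adiIdx.instFintype (g : ℕ) : ∀ k, Fintype (adiIdx g k)
  | 0 => inferInstanceAs (Fintype (Fin 0))
  | k + 1 =>
    letI := adiIdx.instFintype g k
    inferInstanceAs (Fintype (adiIdx g k ⊕ Fin g))

instance adiIdx.instDecidableEq (g : ℕ) : ∀ k, DecidableEq (adiIdx g k)
  | 0 => inferInstanceAs (DecidableEq (Fin 0))
  | k + 1 =>
    letI := adiIdx.instDecidableEq g k
    inferInstanceAs (DecidableEq (adiIdx g k ⊕ Fin g))

/--
Exact-arithmetic correctness of the low-rank ADI iteration (Algorithm 1):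
with shifts `α k` such that `Aᴴ + α k Eᴴ` is invertible, and the recursion
`Z₀ = [] , Y₀ = [] , R₀ = G`,
`V_k = (Aᴴ + α_k Eᴴ)⁻¹ R_k`, `R_{k+1} = R_k − 2 Re(α_k) Eᴴ V_k`,
`Z_{k+1} = [Z_k | V_k]`, `Y_{k+1} = [[Y_k, 0],[0, −2 Re(α_k) S]]`,
the Lyapunov residual satisfies, for every `k`,
`Aᴴ(Z_k Y_k Z_kᴴ)E + Eᴴ(Z_k Y_k Z_kᴴ)A + GSGᴴ = R_k S R_kᴴ`.
-/
theorem lowrank_adi_residual_lowrank_representation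
    (n g : ℕ)
    (A E : Matrix (Fin n) (Fin n) ℂ)
    (G : Matrix (Fin n) (Fin g) ℂ)
    (S : Matrix (Fin g) (Fin g) ℂ)
    (α : ℕ → ℂ)
    (hα : ∀ i, IsUnit (Aᴴ + α i • Eᴴ))
    (Z : (k : ℕ) → Matrix (Fin n) (adiIdx g k) ℂ)
    (Y : (k : ℕ) → Matrix (adiIdx g k) (adiIdx g k) ℂ)
    (R V : ℕ → Matrix (Fin n) (Fin g) ℂ)
    (hR0 : R 0 = G)
    (hV : ∀ k, V k = (Aᴴ + α k • Eᴴ)⁻¹ * R k)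
    (hR : ∀ k, R (k + 1) = R k - ((2 * (α k).re : ℝ) : ℂ) • (Eᴴ * V k))
    (hZ : ∀ k, Z (k + 1) = fromCols (Z k) (V k))
    (hY : ∀ k, Y (k + 1) = fromBlocks (Y k) 0 0 ((((-(2 * (α k).re)) : ℝ) : ℂ) • S)) :
    ∀ k, Aᴴ * (Z k * Y k * (Z k)ᴴ) * E + Eᴴ * (Z k * Y k * (Z k)ᴴ) * A + G * S * Gᴴ
      = R k * S * (R k)ᴴ := by
  intro k
  induction k with
  | zero =>
    have hz : Z 0 * Y 0 * (Z 0)ᴴ = 0 := by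
      have : IsEmpty (adiIdx g 0) := show IsEmpty (Fin 0) from inferInstance
      ext i j
      rw [Matrix.mul_apply, Finset.univ_eq_empty, Finset.sum_empty, Matrix.zero_apply]
    rw [hz, hR0]
    simp
  | succ k ih =>
    set c : ℂ := (((-(2 * (α k).re)) : ℝ) : ℂ) with hcdef
    have hc : c = -(α k + star (α k)) := by
      rw [hcdef, show star (α k) = (starRingEnd ℂ) (α k) from rfl, Complex.add_conj]
      push_cast
      ring
    have hcconj : star c = c := by
      rw [hcdef]
      exact Complex.conj_ofReal _
    have hdet : IsUnit (Aᴴ + α k • Eᴴ).det :=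
      (Matrix.isUnit_iff_isUnit_det _).mp (hα k)
    have hRk : R k = Aᴴ * V k + α k • (Eᴴ * V k) := by
      have h : (Aᴴ + α k • Eᴴ) * V k = R k := by
        rw [hV k, ← Matrix.mul_assoc, Matrix.mul_nonsing_inv _ hdet, Matrix.one_mul]
      rw [← h, Matrix.add_mul, Matrix.smul_mul]
    have hRk1 : R (k + 1) = R k + c • (Eᴴ * V k) := by
      rw [hR k, sub_eq_add_neg, hcdef]
      push_cast
      rw [neg_smul]
    have hP : Z (k+1) * Y (k+1) * (Z (k+1))ᴴ
        = Z k * Y k * (Z k)ᴴ + c • (V k * S * (V k)ᴴ) := by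
      have e : Z (k+1) * Y (k+1) * (Z (k+1))ᴴ = fromCols (Z k) (V k) *
          fromBlocks (Y k) 0 0 ((((-(2 * (α k).re)) : ℝ) : ℂ) • S) * (fromCols (Z k) (V k))ᴴ := by
        rw [hZ k, hY k]; rfl
      rw [e, conjTranspose_fromCols_eq_fromRows_conjTranspose,
        fromCols_mul_fromBlocks, fromCols_mul_fromRows]
      simp [Matrix.mul_smul, Matrix.smul_mul, Matrix.mul_assoc]
      rw [hcdef]
      push_cast
      rw [neg_smul]
    have key := ih
    rw [hRk] at key
    rw [hP, hRk1, hRk]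
    simp only [Matrix.mul_add, Matrix.add_mul, Matrix.smul_mul, Matrix.mul_smul,
      conjTranspose_add, conjTranspose_smul, conjTranspose_mul,
      conjTranspose_conjTranspose, Matrix.mul_assoc, smul_add, smul_smul,
      hcconj] at key ⊢
    rw [hc]
    linear_combination (norm := module) key
end
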